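/- arXiv:1403.5037 — 4 statements merged into one kernel-verified Lean document; each statement's English description precedes it below -/
import Mathlib

section
/- Let G be a connected Lie group with a left-invariant Riemannian metric. If the Ricci curvature is negative in all directions tangent to the center of the Lie algebra, then the center of the Lie algebra of G is trivial. -/
open scoped RealInnerProductSpace

noncomputable section

variable {L : Type*} [NormedAddCommGroup L] [InnerProductSpace ℝ L] [FiniteDimensional ℝ L]

/-- The Levi-Civita connection of a left-invariant Riemannian metric on a Lie group,
computed at the identity on left-invariant vector fields:
`∇_X Y = ½ (⁅X,Y⁆ − ad(X)ᵗ Y − ad(Y)ᵗ X)`, where `br` is the Lie bracket of the Lie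
algebra `L` and transposes are taken with respect to the inner product on `L` given by
the metric. -/
def leviCivita (br : L →ₗ[ℝ] L →ₗ[ℝ] L) (X Y : L) : L :=
  (2 : ℝ)⁻¹ • (br X Y - LinearMap.adjoint (br X) Y - LinearMap.adjoint (br Y) X)

/-- The curvature tensor `R(X,Y)Z = ∇_X ∇_Y Z − ∇_Y ∇_X Z − ∇_{⁅X,Y⁆} Z` of a
left-invariant metric. -/
def curvature (br : L →ₗ[ℝ] L →ₗ[ℝ] L) (X Y Z : L) : L :=
  leviCivita br X (leviCivita br Y Z) - leviCivita br Y (leviCivita br X Z) -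
    leviCivita br (br X Y) Z

/-- The Ricci tensor `Ric(X,Y) = Σᵢ ⟨R(X,eᵢ)eᵢ, Y⟩` of a left-invariant metric, evaluated
at the identity. -/
def ricci (br : L →ₗ[ℝ] L →ₗ[ℝ] L) (X Y : L) : ℝ :=
  ∑ i, ⟪curvature br X (stdOrthonormalBasis ℝ L i) (stdOrthonormalBasis ℝ L i), Y⟫

/-!
For a central `X`, `∇_X Y = -½ ad(Y)ᵗ X`, and this vector is orthogonal to `X` because
`⟨ad(Y)ᵗ X, X⟩ = ⟨X, [Y, X]⟩ = 0`. Expanding the curvature then leaves a single term,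
`⟨R(X,Z)Z, X⟩ = ¼ ‖ad(Z)ᵗ X‖² ≥ 0`, so `Ric(X,X) ≥ 0` on the center, which is
incompatible with negative Ricci curvature there unless the center is zero.
-/

section Central

variable {br : L →ₗ[ℝ] L →ₗ[ℝ] L} {X : L}

theorem leviCivita_of_central_left (hXl : ∀ Y, br X Y = 0) (Y : L) :
    leviCivita br X Y = -(2 : ℝ)⁻¹ • LinearMap.adjoint (br Y) X := by
  have hbrX : br X = 0 := LinearMap.ext hXl
  simp [leviCivita, hbrX]

theorem inner_adjoint_apply_central_right (hXr : ∀ Y, br Y X = 0) (Y W : L) :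
    ⟪LinearMap.adjoint (br Y) W, X⟫ = 0 := by
  rw [real_inner_comm, LinearMap.adjoint_inner_right, hXr, inner_zero_left]

theorem inner_leviCivita_of_central_left_self (hXl : ∀ Y, br X Y = 0)
    (hXr : ∀ Y, br Y X = 0) (Y : L) : ⟪leviCivita br X Y, X⟫ = 0 := by
  rw [leviCivita_of_central_left hXl, inner_smul_left,
    inner_adjoint_apply_central_right hXr, mul_zero]

theorem inner_curvature_of_central (hXl : ∀ Y, br X Y = 0) (hXr : ∀ Y, br Y X = 0) (Z : L) :
    ⟪curvature br X Z Z, X⟫ = 4⁻¹ * ‖LinearMap.adjoint (br Z) X‖ ^ 2 := by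
  set W := LinearMap.adjoint (br Z) X with hW
  have hbracket : leviCivita br (br X Z) Z = 0 := by simp [leviCivita, hXl Z]
  have hsecond : leviCivita br Z (leviCivita br X Z) =
      -(4 : ℝ)⁻¹ • (br Z W - LinearMap.adjoint (br Z) W - LinearMap.adjoint (br W) Z) := by
    rw [leviCivita_of_central_left hXl Z, ← hW]
    simp only [leviCivita, map_smul, LinearMap.smul_apply]
    module
  have hnorm : ⟪br Z W, X⟫ = ‖W‖ ^ 2 := by
    rw [real_inner_comm, ← LinearMap.adjoint_inner_left, ← hW, real_inner_self_eq_norm_sq]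
  rw [curvature, inner_sub_left, inner_sub_left, inner_leviCivita_of_central_left_self hXl hXr,
    hbracket, hsecond, inner_smul_left, inner_sub_left, inner_sub_left, hnorm,
    inner_adjoint_apply_central_right hXr, inner_adjoint_apply_central_right hXr, inner_zero_left]
  simp only [conj_trivial]
  ring

theorem ricci_self_nonneg_of_central (hXl : ∀ Y, br X Y = 0) (hXr : ∀ Y, br Y X = 0) :
    0 ≤ ricci br X X :=
  Finset.sum_nonneg fun i _ => by
    rw [inner_curvature_of_central hXl hXr]
    positivity

end Central

theorem center_trivial_of_negative_ricci_on_center_general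
    (br : L →ₗ[ℝ] L →ₗ[ℝ] L)
    (hanti : ∀ X Y : L, br X Y = - br Y X)
    (hneg : ∀ X : L, (∀ Y : L, br X Y = 0) → X ≠ 0 → ricci br X X < 0) :
    ∀ X : L, (∀ Y : L, br X Y = 0) → X = 0 := by
  intro X hXl
  by_contra hX0
  have hXr : ∀ Y, br Y X = 0 := fun Y => by rw [hanti, hXl, neg_zero]
  exact (hneg X hXl hX0).not_ge (ricci_self_nonneg_of_central hXl hXr)

/-- Let `G` be a connected Lie group with a left-invariant Riemannian metric; identify its
Lie algebra `L = Lie(G)` (with bracket `br`) with the tangent space at the identity, so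
that the metric is an inner product on `L`.  If the Ricci curvature is negative in all
nonzero directions tangent to the center of the Lie algebra, then the center of the Lie
algebra of `G` is trivial. -/
theorem center_trivial_of_negative_ricci_on_center
    (br : L →ₗ[ℝ] L →ₗ[ℝ] L)
    (hanti : ∀ X Y : L, br X Y = - br Y X)
    (hjacobi : ∀ X Y Z : L, br X (br Y Z) + br Y (br Z X) + br Z (br X Y) = 0)
    (hneg : ∀ X : L, (∀ Y : L, br X Y = 0) → X ≠ 0 → ricci br X X < 0) :
    ∀ X : L, (∀ Y : L, br X Y = 0) → X = 0 :=
  center_trivial_of_negative_ricci_on_center_general br hanti hneg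

end
end

section
/- Let θ ∈ Hom(u, gl(n)) satisfy Σ_i [θ(Y_i), θ(Y_i)^t] = 0 for an orthonormal basis {Y_i} of u, and suppose for every Z in a subspace z of u the operator θ(Z) is normal and θ(Z)^t commutes with θ(u). Write Y_i = A_i + Z_i with A_i ∈ z^⊥-component in a complement and Z_i ∈ z, where θ(Z_i)^t commutes with all θ(Y). Then Σ_i [θ(A_i), θ(A_i)^t] = 0. -/
/-!
Write `Yᵢ = Aᵢ + Zᵢ`. Since `θ(Zᵢ)` is normal and `θ(Zᵢ)ᵗ` commutes with `θ(Aᵢ)` (hence, taking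
transposes, `θ(Zᵢ)` commutes with `θ(Aᵢ)ᵗ`), all cross terms of `[θ(Yᵢ), θ(Yᵢ)ᵗ]` cancel, so each
summand of the minimality condition equals `[θ(Aᵢ), θ(Aᵢ)ᵗ]`.
-/

theorem mul_star_sub_star_mul_add_of_commute {R : Type*} [Ring R] [StarRing R] {a z : R}
    [hz : IsStarNormal z] (hza : Commute (star z) a) :
    (a + z) * star (a + z) - star (a + z) * (a + z) = a * star a - star a * a := by
  have ha_star_z : a * star z = star z * a := hza.symm.eq
  have hz_star_a : z * star a = star a * z := by
    simpa only [star_mul, star_star] using (congrArg star hza.eq).symm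
  have hz_normal : z * star z = star z * z := hz.star_comm_self.symm.eq
  rw [star_add, mul_add, add_mul, add_mul, mul_add, add_mul, add_mul, ha_star_z, hz_star_a, hz_normal]
  abel

theorem minimality_descends_to_complement_general
    {𝔫 𝔲 : Type*} [NormedAddCommGroup 𝔫] [InnerProductSpace ℝ 𝔫] [FiniteDimensional ℝ 𝔫]
    [NormedAddCommGroup 𝔲] [InnerProductSpace ℝ 𝔲]
    {k : ℕ} (Y : OrthonormalBasis (Fin k) ℝ 𝔲)
    (θ : 𝔲 →ₗ[ℝ] (𝔫 →ₗ[ℝ] 𝔫))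
    (𝔷 : Submodule ℝ 𝔲)
    (A Z : Fin k → 𝔲) (hZ : ∀ i, Z i ∈ 𝔷)
    (hdecomp : ∀ i, Y i = A i + Z i)
    (hmin : ∑ i, (θ (Y i) * LinearMap.adjoint (θ (Y i))
        - LinearMap.adjoint (θ (Y i)) * θ (Y i)) = 0)
    (hnormal : ∀ z ∈ 𝔷, Commute (θ z) (LinearMap.adjoint (θ z)))
    (hcomm : ∀ z ∈ 𝔷, ∀ y : 𝔲, Commute (LinearMap.adjoint (θ z)) (θ y)) :
    ∑ i, (θ (A i) * LinearMap.adjoint (θ (A i))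
        - LinearMap.adjoint (θ (A i)) * θ (A i)) = 0 := by
  simp only [← LinearMap.star_eq_adjoint] at hmin hnormal hcomm ⊢
  rw [← hmin]
  refine Finset.sum_congr rfl fun i _ => ?_
  have : IsStarNormal (θ (Z i)) := ⟨(hnormal _ (hZ i)).symm⟩
  rw [hdecomp i, map_add, mul_star_sub_star_mul_add_of_commute (hcomm _ (hZ i) (A i))]

/-- Let `θ ∈ Hom(𝔲, 𝔤𝔩(𝔫))` satisfy the minimality condition `Σᵢ [θ(Yᵢ), θ(Yᵢ)ᵗ] = 0` for
an orthonormal basis `{Yᵢ}` of `𝔲`, and suppose that for every `Z` in a subspace `𝔷` of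
`𝔲` the operator `θ(Z)` is normal and `θ(Z)ᵗ` commutes with all of `θ(𝔲)`.  Writing
`Yᵢ = Aᵢ + Zᵢ` with `Aᵢ` in a complement `𝔴` of `𝔷` and `Zᵢ ∈ 𝔷`, one has
`Σᵢ [θ(Aᵢ), θ(Aᵢ)ᵗ] = 0`. -/
theorem minimality_descends_to_complement
    {𝔫 𝔲 : Type*} [NormedAddCommGroup 𝔫] [InnerProductSpace ℝ 𝔫] [FiniteDimensional ℝ 𝔫]
    [NormedAddCommGroup 𝔲] [InnerProductSpace ℝ 𝔲] [FiniteDimensional ℝ 𝔲]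
    {k : ℕ} (Y : OrthonormalBasis (Fin k) ℝ 𝔲)
    (θ : 𝔲 →ₗ[ℝ] (𝔫 →ₗ[ℝ] 𝔫))
    (𝔴 𝔷 : Submodule ℝ 𝔲) (hcompl : IsCompl 𝔴 𝔷)
    (A Z : Fin k → 𝔲) (hA : ∀ i, A i ∈ 𝔴) (hZ : ∀ i, Z i ∈ 𝔷)
    (hdecomp : ∀ i, Y i = A i + Z i)
    (hmin : ∑ i, (θ (Y i) * LinearMap.adjoint (θ (Y i))
        - LinearMap.adjoint (θ (Y i)) * θ (Y i)) = 0)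
    (hnormal : ∀ z ∈ 𝔷, Commute (θ z) (LinearMap.adjoint (θ z)))
    (hcomm : ∀ z ∈ 𝔷, ∀ y : 𝔲, Commute (LinearMap.adjoint (θ z)) (θ y)) :
    ∑ i, (θ (A i) * LinearMap.adjoint (θ (A i))
        - LinearMap.adjoint (θ (A i)) * θ (A i)) = 0 :=
  minimality_descends_to_complement_general Y θ 𝔷 A Z hZ hdecomp hmin hnormal hcomm
end

section
/- Let θ₁ ∈ Hom(u, gl(n)) where u = g_c ⊕ g_nc is an orthogonal direct sum, θ₁(g_c) consists of skew-symmetric endomorphisms, θ₁(u) is contained in a Lie subalgebra h of gl(n) closed under transpose, and [θ₁(g_c), θ₁(g_nc)] = 0. Then for any h ∈ H = Z_{GL(n)}(θ₁(g_c)), the moment map value m(h·θ₁) = Σ_i [(h·θ₁)(Y_i), ((h·θ₁)(Y_i))^t] lies in the centralizer of θ₁(g_c) in gl(n). -/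
/-!
Since `h` centralizes `θ₁(g_c)`, `h θ₁(Yᵢ) h⁻¹ = Pᵢ + Cᵢ` with `Pᵢ = θ₁(Aᵢ)` skew and
`Cᵢ = h θ₁(Bᵢ) h⁻¹`. In `Σᵢ [Pᵢ + Cᵢ, (Pᵢ + Cᵢ)ᵗ]` the cross terms are, up to transposes,
`Σᵢ Pᵢ Cᵢ = h (Σᵢ θ₁(Aᵢ) θ₁(Bᵢ)) h⁻¹` and `Σᵢ Cᵢ Pᵢ = h (Σᵢ θ₁(Bᵢ) θ₁(Aᵢ)) h⁻¹`. Both vanish: for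
any bilinear `G`, `Σᵢ G(Aᵢ, Bᵢ) = 0` when `Yᵢ = Aᵢ + Bᵢ` splits an orthonormal basis along
orthogonal pieces, because expanding `Aᵢ` in the basis `Y` and applying Parseval leaves only
inner products `⟪Aⱼ, Bₘ⟫`. What remains is `Σᵢ [Cᵢ, Cᵢᵗ]`, and each `Cᵢ` commutes with the skew
`θ₁(x)`, `x ∈ g_c`, hence so does `Cᵢᵗ`.
-/

open scoped RealInnerProductSpace

namespace OrthonormalBasis

variable {ι E : Type*} [Fintype ι] [NormedAddCommGroup E] [InnerProductSpace ℝ E]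
  (Y : OrthonormalBasis ι ℝ E) {A B : ι → E}

theorem inner_apply_fst_comm (hdec : ∀ i, Y i = A i + B i)
    (horth : ∀ i j, ⟪A i, B j⟫ = 0) (i j : ι) : ⟪Y i, A j⟫ = ⟪A i, Y j⟫ := by
  simp only [hdec, inner_add_left, inner_add_right, horth, real_inner_comm (A j) (B i)]

theorem inner_apply_snd_comm (hdec : ∀ i, Y i = A i + B i)
    (horth : ∀ i j, ⟪A i, B j⟫ = 0) (i j : ι) : ⟪Y i, B j⟫ = ⟪B i, Y j⟫ := by
  simp only [hdec, inner_add_left, inner_add_right, horth, real_inner_comm (A j) (B i)]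

theorem sum_inner_smul_eq_zero_of_inner_eq_zero (hdec : ∀ i, Y i = A i + B i)
    (horth : ∀ i j, ⟪A i, B j⟫ = 0) (j : ι) : ∑ i, ⟪A j, Y i⟫ • B i = 0 := by
  refine InnerProductSpace.ext_inner_left_basis Y.toBasis fun m => ?_
  calc ⟪Y m, ∑ i, ⟪A j, Y i⟫ • B i⟫
      = ∑ i, ⟪A j, Y i⟫ * ⟪Y i, B m⟫ := by
        simp only [inner_sum, inner_smul_right,
          Y.inner_apply_snd_comm hdec horth m, real_inner_comm (Y _) (B m)]
    _ = ⟪Y.toBasis m, 0⟫ := by rw [Y.sum_inner_mul_inner, horth, inner_zero_right]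

theorem sum_bilin_eq_zero_of_inner_eq_zero {M : Type*} [AddCommGroup M] [Module ℝ M]
    (hdec : ∀ i, Y i = A i + B i) (horth : ∀ i j, ⟪A i, B j⟫ = 0)
    (G : E →ₗ[ℝ] E →ₗ[ℝ] M) : ∑ i, G (A i) (B i) = 0 := by
  calc ∑ i, G (A i) (B i)
      = ∑ i, G (∑ j, ⟪Y j, A i⟫ • Y j) (B i) := by simp only [Y.sum_repr']
    _ = ∑ j, G (Y j) (∑ i, ⟪A j, Y i⟫ • B i) := by
        simp only [map_sum, map_smul, LinearMap.sum_apply, LinearMap.smul_apply,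
          Y.inner_apply_fst_comm hdec horth]
        exact Finset.sum_comm
    _ = 0 := by simp only [Y.sum_inner_smul_eq_zero_of_inner_eq_zero hdec horth, map_zero,
          Finset.sum_const_zero]

end OrthonormalBasis

theorem Finset.sum_add_mul_star_sub_eq_of_star_eq_neg {ι R : Type*} [Ring R] [StarRing R]
    (s : Finset ι) (P C : ι → R) (hP : ∀ i ∈ s, star (P i) = -P i)
    (hPC : ∑ i ∈ s, P i * C i = 0) (hCP : ∑ i ∈ s, C i * P i = 0) :
    ∑ i ∈ s, ((P i + C i) * star (P i + C i) - star (P i + C i) * (P i + C i))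
      = ∑ i ∈ s, (C i * star (C i) - star (C i) * C i) := by
  have expand : ∀ i ∈ s, (P i + C i) * star (P i + C i) - star (P i + C i) * (P i + C i)
      = (C i * star (C i) - star (C i) * C i) + (P i * C i - star (C i * P i))
        - (C i * P i - star (P i * C i)) := by
    intro i hi
    rw [star_add, star_mul, star_mul, hP i hi]
    noncomm_ring
  simp only [Finset.sum_congr rfl expand, Finset.sum_sub_distrib, Finset.sum_add_distrib,
    ← star_sum, hPC, hCP, star_zero, sub_zero, add_zero]

theorem Commute.star_right_of_star_eq_neg {R : Type*} [Ring R] [StarRing R] {X C : R}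
    (hX : star X = -X) (h : Commute X C) : Commute X (star C) := by
  simpa [hX] using h.star_star

theorem commute_sum_conj_mul_star_sub
    {ι E R : Type*} [Fintype ι] [NormedAddCommGroup E] [InnerProductSpace ℝ E]
    [Ring R] [StarRing R] [Algebra ℝ R]
    (Y : OrthonormalBasis ι ℝ E) {A B : ι → E} (hdec : ∀ i, Y i = A i + B i)
    (horth : ∀ i j, ⟪A i, B j⟫ = 0) (θ : E →ₗ[ℝ] R) (hskew : ∀ i, star (θ (A i)) = -θ (A i))
    (u : Rˣ) (huA : ∀ i, Commute (u : R) (θ (A i)))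
    {X : R} (hX : star X = -X) (hXu : Commute X u) (hXB : ∀ i, Commute X (θ (B i))) :
    Commute (∑ i, (u * θ (Y i) * u⁻¹ * star (u * θ (Y i) * u⁻¹)
      - star (u * θ (Y i) * u⁻¹) * (u * θ (Y i) * u⁻¹))) X := by
  set C : ι → R := fun i => u * θ (B i) * u⁻¹
  have hconj : ∀ i, u * θ (Y i) * u⁻¹ = θ (A i) + C i := fun i => by
    rw [hdec, map_add, mul_add, add_mul, (huA i).eq, mul_assoc, Units.mul_inv, mul_one]
  have hAB : ∑ i, θ (A i) * θ (B i) = 0 :=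
    Y.sum_bilin_eq_zero_of_inner_eq_zero hdec horth ((LinearMap.mul ℝ R).compl₁₂ θ θ)
  have hBA : ∑ i, θ (B i) * θ (A i) = 0 :=
    Y.sum_bilin_eq_zero_of_inner_eq_zero hdec horth ((LinearMap.mul ℝ R).flip.compl₁₂ θ θ)
  have hAC : ∑ i, θ (A i) * C i = 0 := calc
    ∑ i, θ (A i) * C i = ∑ i, u * (θ (A i) * θ (B i)) * u⁻¹ :=
        Finset.sum_congr rfl fun i _ => by simp only [C, ← mul_assoc, (huA i).eq]
    _ = 0 := by rw [← Finset.sum_mul, ← Finset.mul_sum, hAB, mul_zero, zero_mul]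
  have hCA : ∑ i, C i * θ (A i) = 0 := calc
    ∑ i, C i * θ (A i) = ∑ i, u * (θ (B i) * θ (A i)) * u⁻¹ :=
        Finset.sum_congr rfl fun i _ => by
          simp only [C, mul_assoc, (huA i).units_inv_left.eq]
    _ = 0 := by rw [← Finset.sum_mul, ← Finset.mul_sum, hBA, mul_zero, zero_mul]
  have hXC : ∀ i, Commute X (C i) := fun i =>
    (hXu.mul_right (hXB i)).mul_right hXu.units_inv_right
  simp only [hconj]
  rw [Finset.sum_add_mul_star_sub_eq_of_star_eq_neg _ _ _ (fun i _ => hskew i) hAC hCA]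
  refine Commute.sum_left _ _ _ fun i _ => ?_
  have hXC' := (hXC i).star_right_of_star_eq_neg hX
  exact (((hXC i).mul_right hXC').sub_right (hXC'.mul_right (hXC i))).symm

theorem moment_map_of_flow_in_centralizer_general
    {𝔫 𝔲 : Type*} [NormedAddCommGroup 𝔫] [InnerProductSpace ℝ 𝔫] [FiniteDimensional ℝ 𝔫]
    [NormedAddCommGroup 𝔲] [InnerProductSpace ℝ 𝔲]
    (gc gnc : Submodule ℝ 𝔲)
    (horth : ∀ x ∈ gc, ∀ y ∈ gnc, ⟪x, y⟫ = 0)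
    {k : ℕ} (Y : OrthonormalBasis (Fin k) ℝ 𝔲) (A B : Fin k → 𝔲)
    (hA : ∀ i, A i ∈ gc) (hB : ∀ i, B i ∈ gnc) (hdec : ∀ i, Y i = A i + B i)
    (θ₁ : 𝔲 →ₗ[ℝ] (𝔫 →ₗ[ℝ] 𝔫))
    (hskew : ∀ x ∈ gc, LinearMap.adjoint (θ₁ x) = -θ₁ x)
    (hzero : ∀ x ∈ gc, ∀ y ∈ gnc, Commute (θ₁ x) (θ₁ y))
    (h : 𝔫 ≃ₗ[ℝ] 𝔫) (hH : ∀ x ∈ gc, Commute (h : 𝔫 →ₗ[ℝ] 𝔫) (θ₁ x)) :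
    ∀ x ∈ gc,
      Commute
        (∑ i, ((h : 𝔫 →ₗ[ℝ] 𝔫) * θ₁ (Y i) * (h.symm : 𝔫 →ₗ[ℝ] 𝔫)
              * LinearMap.adjoint ((h : 𝔫 →ₗ[ℝ] 𝔫) * θ₁ (Y i) * (h.symm : 𝔫 →ₗ[ℝ] 𝔫))
            - LinearMap.adjoint ((h : 𝔫 →ₗ[ℝ] 𝔫) * θ₁ (Y i) * (h.symm : 𝔫 →ₗ[ℝ] 𝔫))
              * ((h : 𝔫 →ₗ[ℝ] 𝔫) * θ₁ (Y i) * (h.symm : 𝔫 →ₗ[ℝ] 𝔫))))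
        (θ₁ x) := by
  intro x hx
  -- `star` on `𝔫 →ₗ[ℝ] 𝔫` is `LinearMap.adjoint`, and `ofLinearEquiv h` has inverse `h.symm`,
  -- both definitionally.
  exact commute_sum_conj_mul_star_sub Y hdec (fun i j => horth _ (hA i) _ (hB j)) θ₁
    (fun i => hskew _ (hA i)) (LinearMap.GeneralLinearGroup.ofLinearEquiv h)
    (fun i => hH _ (hA i)) (hskew x hx) (hH x hx).symm (fun i => hzero x hx _ (hB i))

/-- Let `θ₁ ∈ Hom(𝔲, 𝔤𝔩(𝔫))` where `𝔲 = 𝔤_c ⊕ 𝔤_nc` is an orthogonal direct sum,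
`θ₁(𝔤_c)` consists of skew-symmetric endomorphisms, `θ₁(𝔲)` is contained in a Lie
subalgebra `𝔥` of `𝔤𝔩(𝔫)` closed under transpose, and `[θ₁(𝔤_c), θ₁(𝔤_nc)] = 0`.  Then
for any `h ∈ H = Z_{GL(𝔫)}(θ₁(𝔤_c))`, the moment map value
`m(h·θ₁) = Σᵢ [(h·θ₁)(Yᵢ), ((h·θ₁)(Yᵢ))ᵗ]` (where `{Yᵢ}` is an orthonormal basis of `𝔲`,
`Yᵢ = Aᵢ + Bᵢ` with `Aᵢ ∈ 𝔤_c`, `Bᵢ ∈ 𝔤_nc`, and `(h·θ₁)(Y) = h θ₁(Y) h⁻¹`) lies in the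
centralizer of `θ₁(𝔤_c)` in `𝔤𝔩(𝔫)`. -/
theorem moment_map_of_flow_in_centralizer
    {𝔫 𝔲 : Type*} [NormedAddCommGroup 𝔫] [InnerProductSpace ℝ 𝔫] [FiniteDimensional ℝ 𝔫]
    [NormedAddCommGroup 𝔲] [InnerProductSpace ℝ 𝔲] [FiniteDimensional ℝ 𝔲]
    (gc gnc : Submodule ℝ 𝔲) (hcompl : IsCompl gc gnc)
    (horth : ∀ x ∈ gc, ∀ y ∈ gnc, ⟪x, y⟫ = 0)
    {k : ℕ} (Y : OrthonormalBasis (Fin k) ℝ 𝔲) (A B : Fin k → 𝔲)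
    (hA : ∀ i, A i ∈ gc) (hB : ∀ i, B i ∈ gnc) (hdec : ∀ i, Y i = A i + B i)
    (θ₁ : 𝔲 →ₗ[ℝ] (𝔫 →ₗ[ℝ] 𝔫))
    (hskew : ∀ x ∈ gc, LinearMap.adjoint (θ₁ x) = -θ₁ x)
    (𝔥 : Submodule ℝ (𝔫 →ₗ[ℝ] 𝔫))
    (h𝔥lie : ∀ a ∈ 𝔥, ∀ b ∈ 𝔥, a * b - b * a ∈ 𝔥)
    (h𝔥adj : ∀ a ∈ 𝔥, LinearMap.adjoint a ∈ 𝔥)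
    (hrange : ∀ x : 𝔲, θ₁ x ∈ 𝔥)
    (hzero : ∀ x ∈ gc, ∀ y ∈ gnc, Commute (θ₁ x) (θ₁ y))
    (h : 𝔫 ≃ₗ[ℝ] 𝔫) (hH : ∀ x ∈ gc, Commute (h : 𝔫 →ₗ[ℝ] 𝔫) (θ₁ x)) :
    ∀ x ∈ gc,
      Commute
        (∑ i, ((h : 𝔫 →ₗ[ℝ] 𝔫) * θ₁ (Y i) * (h.symm : 𝔫 →ₗ[ℝ] 𝔫)
              * LinearMap.adjoint ((h : 𝔫 →ₗ[ℝ] 𝔫) * θ₁ (Y i) * (h.symm : 𝔫 →ₗ[ℝ] 𝔫))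
            - LinearMap.adjoint ((h : 𝔫 →ₗ[ℝ] 𝔫) * θ₁ (Y i) * (h.symm : 𝔫 →ₗ[ℝ] 𝔫))
              * ((h : 𝔫 →ₗ[ℝ] 𝔫) * θ₁ (Y i) * (h.symm : 𝔫 →ₗ[ℝ] 𝔫))))
        (θ₁ x) :=
  moment_map_of_flow_in_centralizer_general gc gnc horth Y A B hA hB hdec θ₁ hskew hzero h hH
end

section
/- Let g be a 3-dimensional Lie algebra with orthonormal basis {e₁,e₂,e₃} satisfying [e₂,e₃]=λ₁e₁, [e₃,e₁]=λ₂e₂, [e₁,e₂]=λ₃e₃ with λ₁ < 0 < λ₂ ≤ λ₃. Define μ_i = (1/2)(−λ_i + λ_{i+1} + λ_{i+2}) (indices mod 3) and ric(e_i) = 2 μ_{i+1} μ_{i+2}. Then ric(e₁) is not strictly smaller than both ric(e₂) and ric(e₃); i.e., the minimum of the three Ricci eigenvalues is attained at e₂ or e₃. -/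
/-!
Since `μᵢ = (λ₁ + λ₂ + λ₃)/2 - λᵢ`, the differences of the Ricci eigenvalues factor as
`ric(eⱼ) - ric(eᵢ) = 2 μₖ (λⱼ - λᵢ)` for `{i, j, k} = {1, 2, 3}`. As `λ₁` is strictly the
smallest structure constant, `ric(e₁) < ric(e₂)` and `ric(e₁) < ric(e₃)` would force
`μ₃ > 0` and `μ₂ > 0`, which is impossible because `μ₂ + μ₃ = λ₁ < 0`.
-/

namespace Milnor

noncomputable def mu (lam : Fin 3 → ℝ) (i : Fin 3) : ℝ :=
  (1 / 2 : ℝ) * (-lam i + lam (i + 1) + lam (i + 2))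

noncomputable def ric (lam : Fin 3 → ℝ) (i : Fin 3) : ℝ :=
  2 * mu lam (i + 1) * mu lam (i + 2)

variable (lam : Fin 3 → ℝ)

theorem mu_eq_half_sum_sub (i : Fin 3) : mu lam i = (∑ j, lam j) / 2 - lam i := by
  rw [Fin.sum_univ_three]
  fin_cases i <;>
    simp only [mu, Fin.zero_eta, Fin.mk_one, Fin.reduceFinMk, Fin.reduceAdd, zero_add] <;> ring

theorem mu_sub_mu (i j : Fin 3) : mu lam i - mu lam j = lam j - lam i := by
  rw [mu_eq_half_sum_sub, mu_eq_half_sum_sub]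
  ring

theorem mu_add_one_add_mu_add_two (i : Fin 3) : mu lam (i + 1) + mu lam (i + 2) = lam i := by
  rw [mu_eq_half_sum_sub, mu_eq_half_sum_sub, Fin.sum_univ_three]
  fin_cases i <;>
    simp only [Fin.zero_eta, Fin.mk_one, Fin.reduceFinMk, Fin.reduceAdd, zero_add] <;> ring

theorem ric_add_one_sub_ric (i : Fin 3) :
    ric lam (i + 1) - ric lam i = 2 * mu lam (i + 2) * (lam (i + 1) - lam i) := by
  have hmu := mu_sub_mu lam i (i + 1)
  have hidx₁ : i + 1 + 1 = i + 2 := by fin_cases i <;> rfl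
  have hidx₂ : i + 1 + 2 = i := by fin_cases i <;> rfl
  rw [ric, ric, hidx₁, hidx₂, ← hmu]
  ring

theorem ric_add_two_sub_ric (i : Fin 3) :
    ric lam (i + 2) - ric lam i = 2 * mu lam (i + 1) * (lam (i + 2) - lam i) := by
  have hmu := mu_sub_mu lam i (i + 2)
  have hidx₁ : i + 2 + 1 = i := by fin_cases i <;> rfl
  have hidx₂ : i + 2 + 2 = i + 1 := by fin_cases i <;> rfl
  rw [ric, ric, hidx₁, hidx₂, ← hmu]
  ring

theorem not_ric_lt_and_ric_lt {i : Fin 3} (hneg : lam i < 0)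
    (hlt₁ : lam i < lam (i + 1)) (hlt₂ : lam i < lam (i + 2)) :
    ¬ (ric lam i < ric lam (i + 1) ∧ ric lam i < ric lam (i + 2)) := by
  rintro ⟨hric₁, hric₂⟩
  have hmu₂ : 0 < mu lam (i + 2) := by
    have hprod : 0 < mu lam (i + 2) * (lam (i + 1) - lam i) := by
      linarith [ric_add_one_sub_ric lam i]
    exact pos_of_mul_pos_left hprod (sub_pos.2 hlt₁).le
  have hmu₁ : 0 < mu lam (i + 1) := by
    have hprod : 0 < mu lam (i + 1) * (lam (i + 2) - lam i) := by
      linarith [ric_add_two_sub_ric lam i]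
    exact pos_of_mul_pos_left hprod (sub_pos.2 hlt₂).le
  linarith [mu_add_one_add_mu_add_two lam i]

end Milnor

theorem ricci_min_not_at_e1_general
    (lam : Fin 3 → ℝ)
    (h1 : lam 0 < 0) (h2 : 0 < lam 1) (h3 : lam 1 ≤ lam 2)
    (mu : Fin 3 → ℝ)
    (hmu : ∀ i : Fin 3, mu i = (1 / 2 : ℝ) * (-lam i + lam (i + 1) + lam (i + 2)))
    (ric : Fin 3 → ℝ)
    (hric : ∀ i : Fin 3, ric i = 2 * mu (i + 1) * mu (i + 2)) :
    ¬ (ric 0 < ric 1 ∧ ric 0 < ric 2) := by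
  have hmu' : mu = Milnor.mu lam := funext hmu
  have hric' : ric = Milnor.ric lam := by
    funext i
    rw [hric, hmu']
    rfl
  rw [hric']
  exact Milnor.not_ric_lt_and_ric_lt lam (i := 0) h1
    (show lam 0 < lam 1 by linarith) (show lam 0 < lam 2 by linarith)

/-- **Milnor's Ricci formulas for `SL(2,ℝ)`.** Let `𝔤` be a 3-dimensional Lie algebra
(with bracket `br`) with orthonormal basis `{e₁,e₂,e₃}` satisfying `[e₂,e₃] = λ₁e₁`,
`[e₃,e₁] = λ₂e₂`, `[e₁,e₂] = λ₃e₃` with `λ₁ < 0 < λ₂ ≤ λ₃`.  Define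
`μᵢ = ½(−λᵢ + λᵢ₊₁ + λᵢ₊₂)` (indices mod 3) and the principal Ricci curvatures
`ric(eᵢ) = 2 μᵢ₊₁ μᵢ₊₂`.  Then `ric(e₁)` is not strictly smaller than both `ric(e₂)` and
`ric(e₃)`; i.e. the minimum of the three Ricci eigenvalues is attained at `e₂` or `e₃`. -/
theorem ricci_min_not_at_e1
    {L : Type*} [NormedAddCommGroup L] [InnerProductSpace ℝ L] [FiniteDimensional ℝ L]
    (br : L →ₗ[ℝ] L →ₗ[ℝ] L)
    (hanti : ∀ X Y : L, br X Y = - br Y X)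
    (hjacobi : ∀ X Y Z : L, br X (br Y Z) + br Y (br Z X) + br Z (br X Y) = 0)
    (e : OrthonormalBasis (Fin 3) ℝ L) (lam : Fin 3 → ℝ)
    (h1 : lam 0 < 0) (h2 : 0 < lam 1) (h3 : lam 1 ≤ lam 2)
    (hbr1 : br (e 1) (e 2) = lam 0 • e 0)
    (hbr2 : br (e 2) (e 0) = lam 1 • e 1)
    (hbr3 : br (e 0) (e 1) = lam 2 • e 2)
    (mu : Fin 3 → ℝ)
    (hmu : ∀ i : Fin 3, mu i = (1 / 2 : ℝ) * (-lam i + lam (i + 1) + lam (i + 2)))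
    (ric : Fin 3 → ℝ)
    (hric : ∀ i : Fin 3, ric i = 2 * mu (i + 1) * mu (i + 2)) :
    ¬ (ric 0 < ric 1 ∧ ric 0 < ric 2) :=
  ricci_min_not_at_e1_general lam h1 h2 h3 mu hmu ric hric
end
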